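/- arXiv:2502.11522 — 5 statements merged into one kernel-verified Lean document; each statement's English description precedes it below -/
import Mathlib

section
/- Let G be a connected simple graph on n ≥ 3 vertices such that every pair of vertices at distance 2 has degree sum at least n. Then G is 2-connected (has no cut-vertex). -/
/-!
If `G - v` were disconnected, every component of `G - v` would contain a neighbour of `v`,
since `G` is connected. Neighbours `a` and `b` of `v` in different components are at distance
two, and all neighbours of `a` lie in its own component `A` or are `v`, so `d(a) ≤ |A|`;
likewise `d(b) ≤ |B|`. As `A`, `B` and `{v}` are disjoint, `d(a) + d(b) ≤ n - 1`,
contradicting the degree condition.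
-/

open SimpleGraph

namespace SimpleGraph

variable {V : Type*} {G : SimpleGraph V}

theorem Walk.exists_reachable_induce_adj_notMem {s : Set V} {z t : V} (p : G.Walk z t)
    (hz : z ∈ s) (ht : t ∉ s) :
    ∃ y : s, (G.induce s).Reachable ⟨z, hz⟩ y ∧ ∃ w ∉ s, G.Adj y w := by
  induction p with
  | nil => exact absurd hz ht
  | @cons z c t hzc q ih =>
    by_cases hc : c ∈ s
    · obtain ⟨y, hcy, hyw⟩ := ih hc ht
      have hzc' : (G.induce s).Adj ⟨z, hz⟩ ⟨c, hc⟩ := hzc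
      exact ⟨y, hzc'.reachable.trans hcy, hyw⟩
    · exact ⟨⟨z, hz⟩, .rfl, c, hc, hzc⟩

theorem Reachable.exists_reachable_induce_compl_singleton_adj {v : V}
    {a : ({v}ᶜ : Set V)} (h : G.Reachable a v) :
    ∃ y : ({v}ᶜ : Set V), (G.induce {v}ᶜ).Reachable a y ∧ G.Adj y v := by
  obtain ⟨p⟩ := h
  obtain ⟨y, hay, w, hw, hyw⟩ := p.exists_reachable_induce_adj_notMem a.2 (by simp)
  rw [Set.notMem_compl_iff, Set.mem_singleton_iff] at hw
  exact ⟨y, hay, hw ▸ hyw⟩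

theorem dist_eq_two_of_adj_of_adj {u w v : V} (hne : u ≠ w) (hnadj : ¬ G.Adj u w)
    (hu : G.Adj u v) (hw : G.Adj w v) : G.dist u w = 2 := by
  rw [dist, G.edist_eq_two_iff.2 ⟨hne, hnadj, v, hu, hw⟩]
  rfl

variable [Fintype V]

open Classical in
noncomputable def inducedComponent (G : SimpleGraph V) (s : Set V) (a : s) : Finset V :=
  {x | ∃ hx : x ∈ s, (G.induce s).Reachable a ⟨x, hx⟩}

@[simp]
theorem mem_inducedComponent {s : Set V} {a : s} {x : V} :
    x ∈ G.inducedComponent s a ↔ ∃ hx : x ∈ s, (G.induce s).Reachable a ⟨x, hx⟩ := by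
  simp [inducedComponent]

theorem mem_inducedComponent_self {s : Set V} (a : s) : (a : V) ∈ G.inducedComponent s a :=
  mem_inducedComponent.2 ⟨a.2, .rfl⟩

theorem mem_inducedComponent_of_adj {s : Set V} {a : s} {x y : V}
    (hx : x ∈ G.inducedComponent s a) (hxy : G.Adj x y) (hy : y ∈ s) :
    y ∈ G.inducedComponent s a := by
  obtain ⟨hx, hax⟩ := mem_inducedComponent.1 hx
  have hxy' : (G.induce s).Adj ⟨x, hx⟩ ⟨y, hy⟩ := hxy
  exact mem_inducedComponent.2 ⟨hy, hax.trans hxy'.reachable⟩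

theorem disjoint_inducedComponent {s : Set V} {a b : s} (h : ¬ (G.induce s).Reachable a b) :
    Disjoint (G.inducedComponent s a) (G.inducedComponent s b) := by
  refine Finset.disjoint_left.2 fun x hxa hxb => ?_
  obtain ⟨_, hax⟩ := mem_inducedComponent.1 hxa
  obtain ⟨_, hbx⟩ := mem_inducedComponent.1 hxb
  exact h (hax.trans hbx.symm)

variable [DecidableEq V]

theorem degree_le_card_inducedComponent [DecidableRel G.Adj] {v x : V}
    {a : ({v}ᶜ : Set V)} (hx : x ∈ G.inducedComponent {v}ᶜ a) :
    G.degree x ≤ (G.inducedComponent {v}ᶜ a).card := by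
  have hsub : G.neighborFinset x ⊆ insert v ((G.inducedComponent {v}ᶜ a).erase x) := by
    intro y hy
    rw [mem_neighborFinset] at hy
    by_cases hyv : y = v
    · rw [hyv]
      exact Finset.mem_insert_self _ _
    · exact Finset.mem_insert_of_mem
        (Finset.mem_erase.2 ⟨hy.ne', mem_inducedComponent_of_adj hx hy hyv⟩)
  calc G.degree x = (G.neighborFinset x).card := (card_neighborFinset_eq_degree G x).symm
    _ ≤ (insert v ((G.inducedComponent {v}ᶜ a).erase x)).card := Finset.card_le_card hsub
    _ ≤ ((G.inducedComponent {v}ᶜ a).erase x).card + 1 := Finset.card_insert_le _ _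
    _ = (G.inducedComponent {v}ᶜ a).card := Finset.card_erase_add_one hx

theorem card_inducedComponent_add_card_lt {v : V} {a b : ({v}ᶜ : Set V)}
    (h : ¬ (G.induce {v}ᶜ).Reachable a b) :
    (G.inducedComponent {v}ᶜ a).card + (G.inducedComponent {v}ᶜ b).card < Fintype.card V := by
  have hv : v ∉ G.inducedComponent {v}ᶜ a ∪ G.inducedComponent {v}ᶜ b := by simp
  calc (G.inducedComponent {v}ᶜ a).card + (G.inducedComponent {v}ᶜ b).card
      = (G.inducedComponent {v}ᶜ a ∪ G.inducedComponent {v}ᶜ b).card :=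
        (Finset.card_union_of_disjoint (disjoint_inducedComponent h)).symm
    _ < (insert v (G.inducedComponent {v}ᶜ a ∪ G.inducedComponent {v}ᶜ b)).card :=
        Finset.card_lt_card (Finset.ssubset_insert hv)
    _ ≤ Fintype.card V := Finset.card_le_univ _

theorem degree_add_degree_lt_card_of_not_reachable_induce [DecidableRel G.Adj] {v : V}
    {a b : ({v}ᶜ : Set V)} (h : ¬ (G.induce {v}ᶜ).Reachable a b) :
    G.degree a + G.degree b < Fintype.card V := by
  have ha := degree_le_card_inducedComponent (mem_inducedComponent_self (G := G) a)
  have hb := degree_le_card_inducedComponent (mem_inducedComponent_self (G := G) b)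
  have := card_inducedComponent_add_card_lt h
  omega

end SimpleGraph

theorem stmt_2 {V : Type*} [Fintype V] [DecidableEq V] (G : SimpleGraph V)
    [DecidableRel G.Adj] (hconn : G.Connected) (hn : 3 ≤ Fintype.card V)
    (hmu : ∀ u v : V, G.dist u v = 2 → Fintype.card V ≤ G.degree u + G.degree v) :
    ∀ v : V, (G.induce ({v}ᶜ : Set V)).Connected := by
  intro v
  obtain ⟨w, hw⟩ := Fintype.exists_ne_of_one_lt_card (by omega) v
  have : Nonempty ({v}ᶜ : Set V) := ⟨⟨w, hw⟩⟩
  refine (connected_iff _).2 ⟨fun a b => ?_, this⟩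
  by_contra hab
  obtain ⟨a', haa', ha'v⟩ := (hconn a v).exists_reachable_induce_compl_singleton_adj
  obtain ⟨b', hbb', hb'v⟩ := (hconn b v).exists_reachable_induce_compl_singleton_adj
  have hab' : ¬ (G.induce {v}ᶜ).Reachable a' b' := fun h => hab (haa'.trans (h.trans hbb'.symm))
  have hne : a'.val ≠ b'.val := fun h => hab' (Subtype.ext h ▸ .rfl)
  have hnadj : ¬ G.Adj a' b' := fun h => hab' (Adj.reachable (G := G.induce {v}ᶜ) h)
  have hdeg := hmu a' b' (dist_eq_two_of_adj_of_adj hne hnadj ha'v hb'v)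
  have := degree_add_degree_lt_card_of_not_reachable_induce hab'
  omega
end

section
/- Let G be a connected simple graph on n ≥ 3 vertices with μ₂(G) ≥ n. If {u, v} is a 2-element vertex cut of G, then G − {u, v} has exactly two connected components. -/
/-!
Every component of `G - {u, v}` contains a vertex adjacent to `u` or `v`, since `G` is connected.
If there were three components, two of them would contain vertices `x`, `y` with a common
neighbour in `{u, v}`, so `dist x y = 2`. The neighbourhoods of `x` and `y` avoid `x`, `y` and a
vertex `z` of the third component, and they meet only inside `{u, v}`; hence
`d(x) + d(y) ≤ (n - 3) + 2 < n`, contradicting `μ₂(G) ≥ n`.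
-/

open Finset

namespace SimpleGraph

variable {V : Type*} {G : SimpleGraph V} {S : Set V}

lemma Walk.exists_reachable_induce_adj_notMem_s3 {a c : V} (p : G.Walk a c) (ha : a ∈ S)
    (hc : c ∉ S) : ∃ x : S, (G.induce S).Reachable ⟨a, ha⟩ x ∧ ∃ w ∉ S, G.Adj x w := by
  induction p with
  | nil => exact absurd ha hc
  | @cons a b c hab p ih =>
    by_cases hb : b ∈ S
    · obtain ⟨x, hbx, hx⟩ := ih hb hc
      exact ⟨x, (Adj.reachable (by simpa using hab)).trans hbx, hx⟩
    · exact ⟨⟨a, ha⟩, .refl _, b, hb, hab⟩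

lemma ConnectedComponent.exists_adj_notMem_of_connected (hG : G.Connected) {c : V} (hc : c ∉ S)
    (C : (G.induce S).ConnectedComponent) :
    ∃ x : S, (G.induce S).connectedComponentMk x = C ∧ ∃ w ∉ S, G.Adj x w := by
  obtain ⟨a, rfl⟩ := C.exists_rep
  obtain ⟨x, hax, hx⟩ := (hG.preconnected a c).some.exists_reachable_induce_adj_notMem_s3 a.2 hc
  exact ⟨x, (ConnectedComponent.sound hax).symm, hx⟩

lemma coe_ne_of_not_reachable_induce {x y : S} (h : ¬ (G.induce S).Reachable x y) :
    (x : V) ≠ y :=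
  fun hxy => h (Subtype.ext hxy ▸ .refl _)

lemma not_adj_of_not_reachable_induce {x y : S} (h : ¬ (G.induce S).Reachable x y) :
    ¬ G.Adj x y :=
  fun hxy => h (Adj.reachable (by simpa using hxy))

lemma notMem_of_mem_commonNeighbors_of_not_reachable_induce {x y : S}
    (h : ¬ (G.induce S).Reachable x y) {t : V} (ht : t ∈ G.commonNeighbors x y) : t ∉ S :=
  fun htS => h <| (Adj.reachable (v := ⟨t, htS⟩) (by simpa using ht.1)).trans
    (Adj.reachable (by simpa using ht.2.symm))

lemma dist_eq_two_of_not_reachable_induce {x y : S} (h : ¬ (G.induce S).Reachable x y)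
    {w : V} (hw : w ∈ G.commonNeighbors x y) : G.dist x y = 2 := by
  rw [dist, edist_eq_two_iff.mpr
    ⟨coe_ne_of_not_reachable_induce h, not_adj_of_not_reachable_induce h, w, hw⟩]
  rfl

variable [Fintype V] [DecidableRel G.Adj]

lemma degree_add_degree_add_three_le {x y z : V} (hxy : x ≠ y) (hxz : x ≠ z) (hyz : y ≠ z)
    (hnxy : ¬ G.Adj x y) (hnxz : ¬ G.Adj x z) (hnyz : ¬ G.Adj y z) :
    G.degree x + G.degree y + 3 ≤ Fintype.card V + (G.commonNeighbors x y).ncard := by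
  classical
  have hcommon :
      (G.commonNeighbors x y).ncard = #(G.neighborFinset x ∩ G.neighborFinset y) := by
    rw [← Set.ncard_coe_finset, coe_inter, coe_neighborFinset, coe_neighborFinset,
      commonNeighbors_eq]
  have hdisj : Disjoint (G.neighborFinset x ∪ G.neighborFinset y) {x, y, z} := by
    rw [Finset.disjoint_left]
    simp only [mem_union, mem_neighborFinset, mem_insert, mem_singleton]
    grind [G.loopless.irrefl, G.adj_comm]
  calc G.degree x + G.degree y + 3
      = #(G.neighborFinset x ∪ G.neighborFinset y) + #(G.neighborFinset x ∩ G.neighborFinset y)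
          + #{x, y, z} := by
        rw [card_union_add_card_inter, card_eq_three.mpr ⟨x, y, z, hxy, hxz, hyz, rfl⟩]; rfl
    _ = #((G.neighborFinset x ∪ G.neighborFinset y) ∪ {x, y, z})
          + #(G.neighborFinset x ∩ G.neighborFinset y) := by
        rw [card_union_of_disjoint hdisj]; ring
    _ ≤ Fintype.card V + (G.commonNeighbors x y).ncard := by
        rw [hcommon]; gcongr; exact card_le_univ _

lemma degree_add_degree_add_three_le_of_not_reachable_induce {x y z : S}
    (hxy : ¬ (G.induce S).Reachable x y) (hxz : ¬ (G.induce S).Reachable x z)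
    (hyz : ¬ (G.induce S).Reachable y z) :
    G.degree x + G.degree y + 3 ≤ Fintype.card V + Sᶜ.ncard :=
  calc G.degree x + G.degree y + 3 ≤ Fintype.card V + (G.commonNeighbors x y).ncard :=
        degree_add_degree_add_three_le (coe_ne_of_not_reachable_induce hxy)
          (coe_ne_of_not_reachable_induce hxz) (coe_ne_of_not_reachable_induce hyz)
          (not_adj_of_not_reachable_induce hxy) (not_adj_of_not_reachable_induce hxz)
          (not_adj_of_not_reachable_induce hyz)
    _ ≤ Fintype.card V + Sᶜ.ncard := by
        gcongr
        · exact Set.toFinite _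
        · exact fun t ht => notMem_of_mem_commonNeighbors_of_not_reachable_induce hxy ht

lemma three_le_ncard_compl_of_not_reachable_induce
    (hmu : ∀ x y, G.dist x y = 2 → Fintype.card V ≤ G.degree x + G.degree y) {x y z : S}
    (hxy : ¬ (G.induce S).Reachable x y) (hxz : ¬ (G.induce S).Reachable x z)
    (hyz : ¬ (G.induce S).Reachable y z) {w : V} (hxw : G.Adj x w) (hyw : G.Adj y w) :
    3 ≤ Sᶜ.ncard := by
  have hdeg := hmu x y (dist_eq_two_of_not_reachable_induce hxy (w := w) ⟨hxw, hyw⟩)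
  have hbound := degree_add_degree_add_three_le_of_not_reachable_induce hxy hxz hyz
  omega

theorem card_connectedComponent_induce_compl_pair_le_two (hG : G.Connected)
    (hmu : ∀ x y, G.dist x y = 2 → Fintype.card V ≤ G.degree x + G.degree y) (u v : V) :
    Nat.card (G.induce ({u, v} : Set V)ᶜ).ConnectedComponent ≤ 2 := by
  set S : Set V := {u, v}ᶜ
  have hS : Sᶜ.ncard ≤ 2 := by
    rw [compl_compl]
    exact (Set.ncard_insert_le u {v}).trans (by simp)
  by_contra! h
  have := Fintype.ofFinite (G.induce S).ConnectedComponent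
  rw [Nat.card_eq_fintype_card] at h
  obtain ⟨C₁, C₂, C₃, h₁₂, h₁₃, h₂₃⟩ := Fintype.two_lt_card_iff.mp h
  have huS : u ∉ S := by simp [S]
  obtain ⟨x₁, rfl, w₁, hw₁, h₁⟩ := C₁.exists_adj_notMem_of_connected hG huS
  obtain ⟨x₂, rfl, w₂, hw₂, h₂⟩ := C₂.exists_adj_notMem_of_connected hG huS
  obtain ⟨x₃, rfl, w₃, hw₃, h₃⟩ := C₃.exists_adj_notMem_of_connected hG huS
  simp only [ne_eq, ConnectedComponent.eq] at h₁₂ h₁₃ h₂₃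
  have hpigeon : w₁ = w₂ ∨ w₁ = w₃ ∨ w₂ = w₃ := by
    simp only [S, Set.mem_compl_iff, not_not, Set.mem_insert_iff, Set.mem_singleton_iff]
      at hw₁ hw₂ hw₃
    grind
  rcases hpigeon with rfl | rfl | rfl
  · have := three_le_ncard_compl_of_not_reachable_induce hmu h₁₂ h₁₃ h₂₃ h₁ h₂
    omega
  · have := three_le_ncard_compl_of_not_reachable_induce hmu h₁₃ h₁₂ (mt .symm h₂₃) h₁ h₃
    omega
  · have := three_le_ncard_compl_of_not_reachable_induce hmu h₂₃ (mt .symm h₁₂) (mt .symm h₁₃)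
      h₂ h₃
    omega

end SimpleGraph

open SimpleGraph

theorem stmt_3_general {V : Type*} [Fintype V] (G : SimpleGraph V)
    [DecidableRel G.Adj] (hconn : G.Connected)
    (hmu : ∀ u v : V, G.dist u v = 2 → Fintype.card V ≤ G.degree u + G.degree v)
    (u v : V)
    (hcut : ¬ (G.induce (({u, v} : Set V)ᶜ)).Preconnected) :
    Nat.card (G.induce (({u, v} : Set V)ᶜ)).ConnectedComponent = 2 := by
  refine le_antisymm (card_connectedComponent_induce_compl_pair_le_two hconn hmu u v) ?_
  by_contra! h
  have := Finite.card_le_one_iff_subsingleton.mp (Nat.le_of_lt_succ h)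
  exact hcut fun a b => ConnectedComponent.exact (Subsingleton.elim _ _)

theorem stmt_3 {V : Type*} [Fintype V] [DecidableEq V] (G : SimpleGraph V)
    [DecidableRel G.Adj] (hconn : G.Connected) (hn : 3 ≤ Fintype.card V)
    (hmu : ∀ u v : V, G.dist u v = 2 → Fintype.card V ≤ G.degree u + G.degree v)
    (u v : V) (huv : u ≠ v)
    (hcut : ¬ (G.induce (({u, v} : Set V)ᶜ)).Preconnected) :
    Nat.card (G.induce (({u, v} : Set V)ᶜ)).ConnectedComponent = 2 :=
  stmt_3_general G hconn hmu u v hcut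
end

section
/- Let G be a connected simple graph on n vertices with μ₂(G) ≥ n. Let x, y be vertices with dist(x,y) = 2 chosen so that |N(x) ∩ N(y)| is minimum among all pairs at distance 2. Set M = N(x) ∩ N(y) and D = V(G) \ ({x,y} ∪ N(x) ∪ N(y)). Then |D| ≤ |M| − 2. -/
open SimpleGraph

namespace SimpleGraph

variable {V : Type*} (G : SimpleGraph V)

lemma ncard_neighborSet [Fintype V] [DecidableRel G.Adj] (v : V) :
    (G.neighborSet v).ncard = G.degree v := by
  rw [← Nat.card_coe_set_eq, Nat.card_eq_fintype_card, card_neighborSet_eq_degree]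

lemma disjoint_pair_neighborSet_union {x y : V} (hxy : ¬G.Adj x y) :
    Disjoint ({x, y} : Set V) (G.neighborSet x ∪ G.neighborSet y) := by
  simp only [Set.disjoint_left, Set.mem_insert_iff, Set.mem_singleton_iff, Set.mem_union,
    mem_neighborSet]
  rintro v (rfl | rfl) (h | h)
  exacts [G.irrefl h, hxy h.symm, hxy h, G.irrefl h]

lemma ncard_compl_add_degree_add_degree [Fintype V] [DecidableRel G.Adj] {x y : V}
    (hne : x ≠ y) (hxy : ¬G.Adj x y) :
    (Set.univ \ ({x, y} ∪ G.neighborSet x ∪ G.neighborSet y)).ncard + 2 +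
        (G.degree x + G.degree y) =
      Fintype.card V + (G.neighborSet x ∩ G.neighborSet y).ncard := by
  have hsplit := Set.ncard_compl_add_ncard ({x, y} ∪ (G.neighborSet x ∪ G.neighborSet y))
  rw [Set.ncard_union_eq (G.disjoint_pair_neighborSet_union hxy), Set.ncard_pair hne,
    Nat.card_eq_fintype_card, ← Set.union_assoc, Set.compl_eq_univ_sdiff] at hsplit
  have hie := Set.ncard_union_add_ncard_inter (G.neighborSet x) (G.neighborSet y)
  rw [ncard_neighborSet, ncard_neighborSet] at hie
  omega

end SimpleGraph

theorem stmt_5_general {V : Type*} [Fintype V] (G : SimpleGraph V)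
    [DecidableRel G.Adj]
    (hmu : ∀ u v : V, G.dist u v = 2 → Fintype.card V ≤ G.degree u + G.degree v)
    (x y : V) (hxy : G.dist x y = 2) :
    (Set.univ \ ({x, y} ∪ G.neighborSet x ∪ G.neighborSet y)).ncard + 2 ≤
      (G.neighborSet x ∩ G.neighborSet y).ncard := by
  have hne : x ≠ y := by
    rintro rfl
    simp at hxy
  have hnadj : ¬G.Adj x y := fun h ↦ by
    simp [dist_eq_one_iff_adj.mpr h] at hxy
  have hcount := G.ncard_compl_add_degree_add_degree hne hnadj
  have hdeg := hmu x y hxy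
  omega

theorem stmt_5 {V : Type*} [Fintype V] [DecidableEq V] (G : SimpleGraph V)
    [DecidableRel G.Adj] (hconn : G.Connected)
    (hmu : ∀ u v : V, G.dist u v = 2 → Fintype.card V ≤ G.degree u + G.degree v)
    (x y : V) (hxy : G.dist x y = 2)
    (hmin : ∀ u v : V, G.dist u v = 2 →
      (G.neighborFinset x ∩ G.neighborFinset y).card ≤
        (G.neighborFinset u ∩ G.neighborFinset v).card) :
    (Set.univ \ ({x, y} ∪ G.neighborSet x ∪ G.neighborSet y)).ncard + 2 ≤
      (G.neighborSet x ∩ G.neighborSet y).ncard :=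
  stmt_5_general G hmu x y hxy
end

section
/- The complete bipartite graph K_{3,3} does not have two completely independent spanning trees. -/
open SimpleGraph

def crossSubgraph {V : Type*} (G : SimpleGraph V) (A B : Set V) : SimpleGraph V where
  Adj a b := G.Adj a b ∧ ((a ∈ A ∧ b ∈ B) ∨ (a ∈ B ∧ b ∈ A))
  symm := by
    constructor
    rintro a b ⟨h, hc | hc⟩
    · exact ⟨h.symm, Or.inr ⟨hc.2, hc.1⟩⟩
    · exact ⟨h.symm, Or.inl ⟨hc.2, hc.1⟩⟩
  loopless := ⟨fun a h => G.irrefl h.1⟩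

/-- Every component of `H` that contains an edge also contains a cycle
    (i.e. `H`, viewed as the edge-induced subgraph, has no tree component). -/
def NoTreeComponent {V : Type*} (H : SimpleGraph V) : Prop :=
  ∀ v : V, (∃ w, H.Adj v w) →
    ∃ w, H.Reachable v w ∧ ∃ c : H.Walk w w, c.IsCycle

def IsCIST2Partition {V : Type*} (G : SimpleGraph V) (A B : Set V) : Prop :=
  A ∪ B = Set.univ ∧ Disjoint A B ∧
  (G.induce A).Connected ∧ (G.induce B).Connected ∧
  NoTreeComponent (crossSubgraph G A B)

/-- `T 0, …, T (k-1)` are `k` completely independent spanning trees of `G`. -/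
def AreCISTs {V : Type*} (G : SimpleGraph V) {k : ℕ} (T : Fin k → SimpleGraph V) : Prop :=
  (∀ i, T i ≤ G ∧ (T i).IsTree) ∧
  ∀ i j, i ≠ j → ∀ u v : V, ∀ (p : (T i).Walk u v) (q : (T j).Walk u v),
    p.IsPath → q.IsPath →
      (∀ e ∈ p.edges, e ∉ q.edges) ∧
      (∀ w ∈ p.support, w ∈ q.support → w = u ∨ w = v)

def HasKCISTs {V : Type*} (G : SimpleGraph V) (k : ℕ) : Prop :=
  ∃ T : Fin k → SimpleGraph V, AreCISTs G T

/-! Completely independent spanning trees are pairwise edge-disjoint (two trees sharing an edge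
would give the same one-edge path between its ends), so two of them on the six vertices of
`K_{3,3}` would need `2 * 5 = 10` distinct edges, while `K_{3,3}` has only `9`. -/

namespace AreCISTs

variable {V : Type*} {G : SimpleGraph V} {k : ℕ} {T : Fin k → SimpleGraph V}

theorem disjoint_edgeSet (h : AreCISTs G T) {i j : Fin k} (hij : i ≠ j) :
    Disjoint (T i).edgeSet (T j).edgeSet := by
  refine Set.disjoint_left.mpr fun e hi hj => ?_
  induction e using Sym2.ind with
  | _ u v =>
    rw [mem_edgeSet] at hi hj
    exact (h.2 i j hij u v hi.toWalk hj.toWalk hi.isPath_toWalk hj.isPath_toWalk).1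
      s(u, v) (by simp) (by simp)

theorem mul_card_sub_one_le_ncard_edgeSet [Finite V] (h : AreCISTs G T) :
    k * (Nat.card V - 1) ≤ G.edgeSet.ncard := by
  have hcard : ∀ i, (T i).edgeSet.ncard = Nat.card V - 1 := fun i => by
    have := (isTree_iff_connected_and_card.mp (h.1 i).2).2
    rw [Nat.card_coe_set_eq] at this
    omega
  calc k * (Nat.card V - 1) = (⋃ i, (T i).edgeSet).ncard := by
        rw [Set.ncard_iUnion_of_finite (fun _ => Set.toFinite _)
          (fun _ _ => h.disjoint_edgeSet)]
        simp [hcard, finsum_eq_sum_of_fintype]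
    _ ≤ G.edgeSet.ncard :=
        Set.ncard_le_ncard (Set.iUnion_subset fun i => edgeSet_mono (h.1 i).1)
          (Set.toFinite _)

end AreCISTs

theorem ncard_edgeSet_completeBipartiteGraph {α β : Type*} [Finite α] [Finite β] :
    (completeBipartiteGraph α β).edgeSet.ncard = Nat.card α * Nat.card β := by
  have := encard_edgeSet_completeBipartiteGraph (W₁ := α) (W₂ := β)
  rw [ENat.card_eq_coe_natCard, ENat.card_eq_coe_natCard, ← Nat.cast_mul,
    ← (Set.toFinite _).cast_ncard_eq] at this
  exact_mod_cast this

theorem stmt_11 : ¬ HasKCISTs (completeBipartiteGraph (Fin 3) (Fin 3)) 2 := by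
  rintro ⟨T, hT⟩
  have hcount := hT.mul_card_sub_one_le_ncard_edgeSet
  rw [ncard_edgeSet_completeBipartiteGraph, Nat.card_sum, Nat.card_fin] at hcount
  omega
end

section
/- Let G be a connected simple graph on n ≥ 7 vertices with μ₂(G) ≥ n, and suppose x, y are vertices at distance 2 with N(x) ∩ N(y) = {u₁, u₂} of size exactly 2, where d(u₁) = d(u₂) = 3 would hold. Then this situation is impossible, i.e., at least one of u₁, u₂ has degree at least 4. -/
/-!
Suppose `d(u₁), d(u₂) ≤ 3`. Then `u₁u₂` is an edge (else `μ₂ ≤ 6 < n`), so `N(u₁) = {x, y, u₂}`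
and `N(u₂) = {x, y, u₁}`. Since `d(x) + d(y) ≥ n` while `x` and `y` share only two neighbours,
every other vertex is adjacent to `x` or `y`. Take `w ∉ {x, y, u₁, u₂}`: it is at distance 2
from `u₁`, so `d(w) ≥ n - 3`, forcing `w` to be adjacent to everything except `u₁, u₂`.
In particular `w` is a third common neighbour of `x` and `y`.
-/

open SimpleGraph Finset

namespace SimpleGraph

variable {V : Type*} {G : SimpleGraph V} {u v w : V}

lemma dist_eq_two_iff :
    G.dist u v = 2 ↔ u ≠ v ∧ ¬G.Adj u v ∧ (G.commonNeighbors u v).Nonempty := by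
  rw [dist, ENat.toNat_eq_iff two_ne_zero, Nat.cast_ofNat, edist_eq_two_iff]

variable [Fintype V] [DecidableRel G.Adj]

lemma not_adj_of_degree_le_three {a b c : V} (hva : G.Adj v a) (hvb : G.Adj v b)
    (hvc : G.Adj v c) (hab : a ≠ b) (hac : a ≠ c) (hbc : b ≠ c) (hdeg : G.degree v ≤ 3)
    (hwa : w ≠ a) (hwb : w ≠ b) (hwc : w ≠ c) : ¬G.Adj v w := by
  classical
  have hsub : {a, b, c} ⊆ G.neighborFinset v := by simp [insert_subset_iff, hva, hvb, hvc]
  have hcard : #(G.neighborFinset v) ≤ #{a, b, c} := by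
    rwa [card_eq_three.mpr ⟨a, b, c, hab, hac, hbc, rfl⟩, card_neighborFinset_eq_degree]
  rw [← mem_neighborFinset, ← eq_of_subset_of_card_le hsub hcard]
  simp [hwa, hwb, hwc]

variable [DecidableEq V]

lemma adj_of_card_le_degree_add_card {s : Finset V} (hs : ∀ a ∈ s, ¬G.Adj w a)
    (hdeg : Fintype.card V ≤ G.degree w + #s) (hv : v ∉ s) : G.Adj w v := by
  by_contra hwv
  have hsub : G.neighborFinset w ⊆ (insert v s)ᶜ := by
    intro a ha
    rw [mem_neighborFinset] at ha
    simp only [mem_compl, mem_insert, not_or]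
    exact ⟨fun h => hwv (h ▸ ha), fun h => hs a h ha⟩
  have := card_le_card hsub
  have := card_le_univ (insert v s)
  rw [card_neighborFinset_eq_degree, card_compl, card_insert_of_notMem hv] at *
  omega

lemma adj_or_adj_of_card_le_degree_add_degree {x y : V} (hxy : x ≠ y) (hnadj : ¬G.Adj x y)
    (hdeg : Fintype.card V + #(G.neighborFinset x ∩ G.neighborFinset y) ≤
      G.degree x + G.degree y + 2)
    (hwx : w ≠ x) (hwy : w ≠ y) : G.Adj x w ∨ G.Adj y w := by
  by_contra! hw
  have hsub : G.neighborFinset x ∪ G.neighborFinset y ⊆ {x, y, w}ᶜ := by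
    intro a ha
    simp only [mem_union, mem_neighborFinset] at ha
    simp only [mem_compl, mem_insert, mem_singleton, not_or]
    refine ⟨?_, ?_, ?_⟩ <;> rintro rfl
    · exact ha.elim G.irrefl (fun h => hnadj h.symm)
    · exact ha.elim hnadj G.irrefl
    · exact ha.elim hw.1 hw.2
  have := card_le_card hsub
  have := card_le_univ {x, y, w}
  rw [card_compl, card_insert_of_notMem (by simp [hxy, hwx.symm]),
    card_insert_of_notMem (by simp [hwy.symm]), card_singleton] at *
  have := card_union_add_card_inter (G.neighborFinset x) (G.neighborFinset y)
  simp only [card_neighborFinset_eq_degree] at this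
  omega

end SimpleGraph

theorem stmt_15_general {V : Type*} [Fintype V] [DecidableEq V] (G : SimpleGraph V)
    [DecidableRel G.Adj] (hn : 7 ≤ Fintype.card V)
    (hmu : ∀ u v : V, G.dist u v = 2 → Fintype.card V ≤ G.degree u + G.degree v)
    (x y u₁ u₂ : V) (hxy : G.dist x y = 2) (hu : u₁ ≠ u₂)
    (hM : G.neighborSet x ∩ G.neighborSet y = {u₁, u₂}) :
    4 ≤ G.degree u₁ ∨ 4 ≤ G.degree u₂ := by
  by_contra! hdeg
  have hxy_deg := hmu x y hxy
  obtain ⟨hx_ne_y, hxy_nadj, -⟩ := dist_eq_two_iff.mp hxy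
  have common : ∀ w, G.Adj x w ∧ G.Adj y w ↔ w = u₁ ∨ w = u₂ := fun w => by
    simpa using Set.ext_iff.mp hM w
  have hcommon : G.neighborFinset x ∩ G.neighborFinset y = {u₁, u₂} := by
    ext w; simpa using common w
  obtain ⟨hxu₁, hyu₁⟩ := (common u₁).mpr (.inl rfl)
  obtain ⟨hxu₂, hyu₂⟩ := (common u₂).mpr (.inr rfl)
  have hu₁u₂ : G.Adj u₁ u₂ := by
    by_contra h
    have := hmu u₁ u₂ (dist_eq_two_iff.mpr ⟨hu, h, x, hxu₁.symm, hxu₂.symm⟩)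
    omega
  obtain ⟨w, -, hw⟩ := exists_mem_notMem_of_card_lt_card
    (lt_of_le_of_lt (card_le_four (a := x) (b := y) (c := u₁) (d := u₂))
      (by rw [card_univ]; omega) : #{x, y, u₁, u₂} < #(univ : Finset V))
  simp only [mem_insert, mem_singleton, not_or] at hw
  obtain ⟨hwx, hwy, hwu₁, hwu₂⟩ := hw
  have hu₁w : ¬G.Adj u₁ w := not_adj_of_degree_le_three hxu₁.symm hyu₁.symm hu₁u₂ hx_ne_y
    hxu₂.ne hyu₂.ne (by omega) hwx hwy hwu₂
  have hu₂w : ¬G.Adj u₂ w := not_adj_of_degree_le_three hxu₂.symm hyu₂.symm hu₁u₂.symm hx_ne_y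
    hxu₁.ne hyu₁.ne (by omega) hwx hwy hwu₁
  have hw_deg : Fintype.card V ≤ G.degree u₁ + G.degree w := by
    refine hmu u₁ w (dist_eq_two_iff.mpr ⟨Ne.symm hwu₁, hu₁w, ?_⟩)
    rcases adj_or_adj_of_card_le_degree_add_degree hx_ne_y hxy_nadj
      (by rw [hcommon, card_pair hu]; omega) hwx hwy with h | h
    exacts [⟨x, hxu₁.symm, h.symm⟩, ⟨y, hyu₁.symm, h.symm⟩]
  have hw_adj : ∀ v ∉ ({w, u₁, u₂} : Finset V), G.Adj w v := fun v =>
    adj_of_card_le_degree_add_card (by simp [hu₁w, hu₂w, G.adj_comm w])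
      (by rw [card_eq_three.mpr ⟨w, u₁, u₂, hwu₁, hwu₂, hu, rfl⟩]; omega)
  exact not_or.mpr ⟨hwu₁, hwu₂⟩ <| (common w).mp
    ⟨(hw_adj x (by simp [Ne.symm hwx, hxu₁.ne, hxu₂.ne])).symm,
      (hw_adj y (by simp [Ne.symm hwy, hyu₁.ne, hyu₂.ne])).symm⟩

theorem stmt_15 {V : Type*} [Fintype V] [DecidableEq V] (G : SimpleGraph V)
    [DecidableRel G.Adj] (hconn : G.Connected) (hn : 7 ≤ Fintype.card V)
    (hmu : ∀ u v : V, G.dist u v = 2 → Fintype.card V ≤ G.degree u + G.degree v)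
    (x y u₁ u₂ : V) (hxy : G.dist x y = 2) (hu : u₁ ≠ u₂)
    (hM : G.neighborSet x ∩ G.neighborSet y = {u₁, u₂}) :
    4 ≤ G.degree u₁ ∨ 4 ≤ G.degree u₂ :=
  stmt_15_general G hn hmu x y u₁ u₂ hxy hu hM
end
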